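/- arXiv:1908.06540 — 3 statements merged into one kernel-verified Lean document; each statement's English description precedes it below -/
import Mathlib

section
/- Let 0 < p_l < ε < p ≤ 1. For every feasible prior μ, the posterior confidence satisfies P(μ,p) ≥ (m·θ)/(m·θ + M·(1−θ)), where m is the minimum of f over [p_l, ε] and M is the maximum of f over [p, 1]. -/
open MeasureTheory Set

/-- The Bernoulli likelihood of observing `k` failures in `n` trials. -/
noncomputable def likelihood (k n : ℕ) (x : ℝ) : ℝ := x ^ k * (1 - x) ^ (n - k)

/-- A prior (probability measure on `[0,1]`) is feasible if it assigns mass `θ`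
to `[0, ε]` and full mass to `[p_l, 1]`. -/
def Feasible (pl ε θ : ℝ) (μ : Measure ℝ) : Prop :=
  IsProbabilityMeasure μ ∧ μ (Icc 0 ε) = ENNReal.ofReal θ ∧ μ (Icc pl 1) = 1

/-- The posterior confidence `P(μ, p)` in the bound `p` after observing
`k` failures in `n` miles, with prior `μ`. -/
noncomputable def posterior (k n : ℕ) (μ : Measure ℝ) (p : ℝ) : ℝ :=
  (∫ x in Icc (0 : ℝ) p, likelihood k n x ∂μ) /
    (∫ x in Icc (0 : ℝ) 1, likelihood k n x ∂μ)

/-!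
Split the evidence `∫_{[0,1]} f dμ` at `p` into `A = ∫_{[0,p]} f dμ` and `C = ∫_{(p,1]} f dμ`, so that
`P(μ,p) = A / (A + C)`. Since `μ` is carried by `[p_l,1]`, the mass `θ` of `[0,ε]` sits on
`[p_l,ε] ⊆ [0,p]`, where `f ≥ m`; hence `A ≥ m θ`. The interval `(p,1]` is disjoint from `[0,ε]`,
so it has mass at most `1 - θ` and `C ≤ M (1 - θ)`. Finally `A / (A + C)` increases in `A` and
decreases in `C`.
-/

section SetIntegral

variable {α : Type*} [MeasurableSpace α] {μ : Measure α} [IsFiniteMeasure μ]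
  {f : α → ℝ} {s t : Set α} {c : ℝ}

lemma setIntegral_le_of_le_const_real (hs : MeasurableSet s) (hf : ∀ x ∈ s, f x ≤ c)
    (hfint : IntegrableOn f s μ) : ∫ x in s, f x ∂μ ≤ c * μ.real s :=
  calc ∫ x in s, f x ∂μ ≤ ∫ _ in s, c ∂μ :=
        setIntegral_mono_on hfint (integrableOn_const (measure_ne_top μ s)) hs hf
    _ = c * μ.real s := by rw [setIntegral_const, smul_eq_mul, mul_comm]

lemma mul_measureReal_le_setIntegral_of_subset (ht : MeasurableSet t) (hts : t ⊆ s)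
    (hf₀ : 0 ≤ᵐ[μ.restrict s] f) (hf : ∀ x ∈ t, c ≤ f x) (hfint : IntegrableOn f s μ) :
    c * μ.real t ≤ ∫ x in s, f x ∂μ :=
  (setIntegral_ge_of_const_le_real ht (measure_ne_top μ t) hf (hfint.mono_set hts)).trans
    (setIntegral_mono_set hfint hf₀ hts.eventuallyLE)

end SetIntegral

lemma setIntegral_Icc_eq_add_Ioc {E : Type*} [NormedAddCommGroup E] [NormedSpace ℝ E]
    {f : ℝ → E} {μ : Measure ℝ} {a b c : ℝ} (hab : a ≤ b) (hbc : b ≤ c)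
    (hf : IntegrableOn f (Icc a c) μ) :
    ∫ x in Icc a c, f x ∂μ = ∫ x in Icc a b, f x ∂μ + ∫ x in Ioc b c, f x ∂μ := by
  rw [← Icc_union_Ioc_eq_Icc hab hbc] at hf ⊢
  exact setIntegral_union (disjoint_left.2 fun _ hx hx' ↦ hx'.1.not_ge hx.2) measurableSet_Ioc
    (hf.mono_set subset_union_left) (hf.mono_set subset_union_right)

lemma div_add_le_div_add {a b c d : ℝ} (ha : 0 ≤ a) (hab : a ≤ b) (hc : 0 ≤ c) (hcd : c ≤ d) :
    a / (a + d) ≤ b / (b + c) := by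
  rcases ha.eq_or_lt with rfl | ha
  · rw [zero_div]
    positivity
  rw [div_le_div_iff₀ (by linarith) (by linarith)]
  nlinarith [mul_le_mul hab hcd hc (by linarith)]

section Likelihood

variable (k n : ℕ)

lemma continuous_likelihood : Continuous (likelihood k n) := by
  unfold likelihood
  fun_prop

lemma likelihood_nonneg {x : ℝ} (hx : x ∈ Icc (0 : ℝ) 1) : 0 ≤ likelihood k n x :=
  mul_nonneg (pow_nonneg hx.1 _) (pow_nonneg (sub_nonneg.2 hx.2) _)

lemma nonneg_of_mem_image_likelihood {S : Set ℝ} (hS : S ⊆ Icc 0 1) {y : ℝ}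
    (hy : y ∈ likelihood k n '' S) : 0 ≤ y := by
  obtain ⟨x, hx, rfl⟩ := hy
  exact likelihood_nonneg k n (hS hx)

end Likelihood

namespace Feasible

variable {pl ε θ : ℝ} {μ : Measure ℝ}

lemma measureReal_Icc (hμ : Feasible pl ε θ μ) (hpl : 0 ≤ pl) (hε : ε ≤ 1) (hθ : 0 ≤ θ) :
    μ.real (Icc pl ε) = θ := by
  obtain ⟨_, hθmass, hfull⟩ := hμ
  rw [← max_eq_right hpl, ← min_eq_left hε, ← Icc_inter_Icc, measureReal_def,
    measure_inter_conull ((prob_compl_eq_zero_iff measurableSet_Icc).2 hfull), hθmass,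
    ENNReal.toReal_ofReal hθ]

lemma measureReal_Ioc_le (hμ : Feasible pl ε θ μ) {p : ℝ} (hεp : ε < p) (hθ : 0 ≤ θ) :
    μ.real (Ioc p 1) ≤ 1 - θ := by
  obtain ⟨_, hθmass, -⟩ := hμ
  have hdisj : Disjoint (Icc 0 ε) (Ioc p 1) :=
    disjoint_left.2 fun _ hx hx' ↦ (hx.2.trans_lt hεp).not_gt hx'.1
  have hθreal : μ.real (Icc 0 ε) = θ := by rw [measureReal_def, hθmass, ENNReal.toReal_ofReal hθ]
  have hunion := measureReal_union (μ := μ) hdisj measurableSet_Ioc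
  linarith [measureReal_le_one (μ := μ) (s := Icc 0 ε ∪ Ioc p 1)]

end Feasible

theorem stmt_0_general (k n : ℕ) (pl ε θ p : ℝ)
    (hpl : 0 < pl) (hple : pl < ε) (hεp : ε < p) (hp1 : p ≤ 1)
    (hθ0 : 0 < θ) (m M : ℝ)
    (hm : IsLeast (likelihood k n '' Icc pl ε) m)
    (hM : IsGreatest (likelihood k n '' Icc p 1) M)
    (μ : Measure ℝ) (hμ : Feasible pl ε θ μ) :
    m * θ / (m * θ + M * (1 - θ)) ≤ posterior k n μ p := by
  have := hμ.1
  have hint := (continuous_likelihood k n).integrableOn_Icc (μ := μ) (a := 0) (b := 1)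
  have hp0 : 0 ≤ p := by linarith
  have hm0 := nonneg_of_mem_image_likelihood k n (Icc_subset_Icc hpl.le (by linarith)) hm.1
  have hM0 := nonneg_of_mem_image_likelihood k n (Icc_subset_Icc_left hp0) hM.1
  have hlower : m * θ ≤ ∫ x in Icc 0 p, likelihood k n x ∂μ := by
    rw [← hμ.measureReal_Icc hpl.le (by linarith) hθ0.le]
    exact mul_measureReal_le_setIntegral_of_subset measurableSet_Icc
      (Icc_subset_Icc hpl.le hεp.le)
      (ae_restrict_of_forall_mem measurableSet_Icc fun x hx ↦
        likelihood_nonneg k n ⟨hx.1, hx.2.trans hp1⟩)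
      (fun x hx ↦ hm.2 ⟨x, hx, rfl⟩) (hint.mono_set (Icc_subset_Icc_right hp1))
  have hupper : ∫ x in Ioc p 1, likelihood k n x ∂μ ≤ M * (1 - θ) :=
    (setIntegral_le_of_le_const_real measurableSet_Ioc
      (fun x hx ↦ hM.2 ⟨x, Ioc_subset_Icc_self hx, rfl⟩)
      (hint.mono_set (Ioc_subset_Ioc_left hp0 |>.trans Ioc_subset_Icc_self))).trans
      (mul_le_mul_of_nonneg_left (hμ.measureReal_Ioc_le hεp hθ0.le) hM0)
  have hC0 : 0 ≤ ∫ x in Ioc p 1, likelihood k n x ∂μ :=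
    setIntegral_nonneg measurableSet_Ioc fun x hx ↦
      likelihood_nonneg k n ⟨hp0.trans hx.1.le, hx.2⟩
  rw [posterior, setIntegral_Icc_eq_add_Ioc hp0 hp1 hint]
  exact div_add_le_div_add (mul_nonneg hm0 hθ0.le) hlower hC0 hupper

theorem stmt_0 (k n : ℕ) (hkn : k ≤ n) (pl ε θ p : ℝ)
    (hpl : 0 < pl) (hple : pl < ε) (hεp : ε < p) (hp1 : p ≤ 1)
    (hθ0 : 0 < θ) (hθ1 : θ ≤ 1) (m M : ℝ)
    (hm : IsLeast (likelihood k n '' Icc pl ε) m)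
    (hM : IsGreatest (likelihood k n '' Icc p 1) M)
    (μ : Measure ℝ) (hμ : Feasible pl ε θ μ) :
    m * θ / (m * θ + M * (1 - θ)) ≤ posterior k n μ p :=
  stmt_0_general k n pl ε θ p hpl hple hεp hp1 hθ0 m M hm hM μ hμ
end

section
/- Suppose p_l ≤ p < ε. Then the minimum, over all feasible priors μ, of the posterior confidence P(μ,p) equals 0; in particular, for any x2 ∈ (p, ε) and x3 ∈ (ε, 1], the two-point prior μ = θ·δ_{x2} + (1−θ)·δ_{x3} is feasible and satisfies P(μ,p) = 0. -/
open MeasureTheory Set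

/-- The two-point prior placing mass `θ` at `x1` and mass `1 - θ` at `x3`. -/
noncomputable def twoPoint (θ x1 x3 : ℝ) : Measure ℝ :=
  ENNReal.ofReal θ • Measure.dirac x1 + ENNReal.ofReal (1 - θ) • Measure.dirac x3

theorem stmt_7 (k n : ℕ) (hkn : k ≤ n) (pl ε θ p : ℝ)
    (hpl : 0 < pl) (hple : pl < ε) (hε1 : ε < 1)
    (hθ0 : 0 < θ) (hθ1 : θ ≤ 1)
    (hplp : pl ≤ p) (hpε : p < ε) :
    IsLeast {y : ℝ | ∃ μ : Measure ℝ, Feasible pl ε θ μ ∧ posterior k n μ p = y} 0 ∧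
      ∀ x2 ∈ Ioo p ε, ∀ x3 ∈ Ioc ε 1,
        Feasible pl ε θ (twoPoint θ x2 x3) ∧
          posterior k n (twoPoint θ x2 x3) p = 0 := by
  have hθsum : ENNReal.ofReal θ + ENNReal.ofReal (1 - θ) = 1 := by
    rw [← ENNReal.ofReal_add hθ0.le (by linarith)]
    norm_num
  have hp0 : 0 < p := lt_of_lt_of_le hpl hplp
  have hkey : ∀ x2 ∈ Ioo p ε, ∀ x3 ∈ Ioc ε 1,
      Feasible pl ε θ (twoPoint θ x2 x3) ∧ posterior k n (twoPoint θ x2 x3) p = 0 := by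
    rintro x2 ⟨hx2p, hx2ε⟩ x3 ⟨hx3ε, hx31⟩
    have hx20 : 0 < x2 := hp0.trans hx2p
    have h2ε : (Measure.dirac x2) (Icc 0 ε) = 1 :=
      Measure.dirac_apply_of_mem ⟨hx20.le, hx2ε.le⟩
    have h3ε : (Measure.dirac x3) (Icc 0 ε) = 0 := by
      rw [Measure.dirac_apply]
      exact Set.indicator_of_notMem (fun h => absurd h.2 (not_le.2 hx3ε)) 1
    have h2pl : (Measure.dirac x2) (Icc pl 1) = 1 :=
      Measure.dirac_apply_of_mem ⟨hplp.trans hx2p.le, by linarith⟩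
    have h3pl : (Measure.dirac x3) (Icc pl 1) = 1 :=
      Measure.dirac_apply_of_mem ⟨by linarith, hx31⟩
    have h2p : (Measure.dirac x2) (Icc 0 p) = 0 := by
      rw [Measure.dirac_apply]
      exact Set.indicator_of_notMem (fun h => absurd h.2 (not_le.2 hx2p)) 1
    have h3p : (Measure.dirac x3) (Icc 0 p) = 0 := by
      rw [Measure.dirac_apply]
      exact Set.indicator_of_notMem (fun h => absurd h.2 (not_le.2 (by linarith))) 1
    refine ⟨⟨⟨?_⟩, ?_, ?_⟩, ?_⟩
    · simp [twoPoint, Measure.add_apply, hθsum]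
    · simp [twoPoint, Measure.add_apply, h2ε, h3ε]
    · simp [twoPoint, Measure.add_apply, h2pl, h3pl, hθsum]
    · have hzero : (twoPoint θ x2 x3) (Icc 0 p) = 0 := by
        simp [twoPoint, Measure.add_apply, h2p, h3p]
      rw [posterior, Measure.restrict_eq_zero.mpr hzero, integral_zero_measure, zero_div]
  refine ⟨⟨?_, ?_⟩, hkey⟩
  · refine ⟨twoPoint θ ((p + ε) / 2) ((ε + 1) / 2),
      (hkey _ ⟨by linarith, by linarith⟩ _ ⟨by linarith, by linarith⟩).1,
      (hkey _ ⟨by linarith, by linarith⟩ _ ⟨by linarith, by linarith⟩).2⟩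
  · rintro y ⟨μ, hμ, rfl⟩
    apply div_nonneg <;>
      refine setIntegral_nonneg measurableSet_Icc fun x hx => ?_ <;>
        exact mul_nonneg (pow_nonneg hx.1 _) (pow_nonneg (by nlinarith [hx.2]) _)
end

section
/- Let k be a natural number, let x1, p, θ, c be reals with 0 < x1 < p < 1 and 0 < θ < 1 and 0 < c < 1, and for a real variable n define L(n) = θ·x1^k·(1−x1)^(n−k) / (θ·x1^k·(1−x1)^(n−k) + (1−θ)·p^k·(1−p)^(n−k)), where the exponent n−k uses real exponentiation. Then L(n) = c if and only if n = k + (k·log(x1/p) + log(θ(1−c)/(c(1−θ)))) / log((1−p)/(1−x1)). -/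
theorem stmt_14 (k : ℕ) (x1 p θ c : ℝ)
    (hx1 : 0 < x1) (hx1p : x1 < p) (hp : p < 1)
    (hθ0 : 0 < θ) (hθ1 : θ < 1) (hc0 : 0 < c) (hc1 : c < 1) :
    ∀ n : ℝ,
      θ * x1 ^ k * (1 - x1) ^ (n - (k : ℝ)) /
          (θ * x1 ^ k * (1 - x1) ^ (n - (k : ℝ)) +
            (1 - θ) * p ^ k * (1 - p) ^ (n - (k : ℝ))) = c ↔
        n = (k : ℝ) +
              ((k : ℝ) * Real.log (x1 / p) +
                  Real.log (θ * (1 - c) / (c * (1 - θ)))) /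
                Real.log ((1 - p) / (1 - x1)) := by
  intro n
  have hp0 : 0 < p := lt_trans hx1 hx1p
  have hx11 : x1 < 1 := lt_trans hx1p hp
  have h1x1 : (0:ℝ) < 1 - x1 := by linarith
  have h1p : (0:ℝ) < 1 - p := by linarith
  have h1c : (0:ℝ) < 1 - c := by linarith
  have h1θ : (0:ℝ) < 1 - θ := by linarith
  have hA : 0 < θ * x1 ^ k * (1 - x1) ^ (n - (k:ℝ)) := by positivity
  have hB : 0 < (1 - θ) * p ^ k * (1 - p) ^ (n - (k:ℝ)) := by positivity
  set A := θ * x1 ^ k * (1 - x1) ^ (n - (k:ℝ)) with hAdef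
  set B := (1 - θ) * p ^ k * (1 - p) ^ (n - (k:ℝ)) with hBdef
  have hD' : Real.log (1 - p) - Real.log (1 - x1) ≠ 0 := by
    have h1 : Real.log (1 - p) < Real.log (1 - x1) :=
      Real.log_lt_log h1p (by linarith)
    linarith
  have hDeq : Real.log ((1 - p) / (1 - x1)) = Real.log (1 - p) - Real.log (1 - x1) :=
    Real.log_div (by positivity) (by positivity)
  have step1 : A / (A + B) = c ↔ A * (1 - c) = c * B := by
    rw [div_eq_iff (by positivity : A + B ≠ 0)]
    constructor <;> intro h <;> linear_combination h
  have step2 : A * (1 - c) = c * B ↔ Real.log (A * (1 - c)) = Real.log (c * B) := by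
    constructor
    · intro h; rw [h]
    · intro h
      have h2 : 0 < A * (1 - c) := by positivity
      have h3 : 0 < c * B := by positivity
      rw [← Real.exp_log h2, ← Real.exp_log h3, h]
  have hlogA : Real.log (A * (1 - c)) =
      Real.log θ + (k:ℝ) * Real.log x1 + (n - (k:ℝ)) * Real.log (1 - x1)
        + Real.log (1 - c) := by
    rw [hAdef, Real.log_mul (by positivity) (by positivity),
      Real.log_mul (by positivity) (by positivity),
      Real.log_mul (by positivity) (by positivity),
      Real.log_pow, Real.log_rpow h1x1]
    try push_cast
    try ring
  have hlogB : Real.log (c * B) =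
      Real.log c + Real.log (1 - θ) + (k:ℝ) * Real.log p
        + (n - (k:ℝ)) * Real.log (1 - p) := by
    rw [hBdef, Real.log_mul (by positivity) (by positivity),
      Real.log_mul (by positivity) (by positivity),
      Real.log_mul (by positivity) (by positivity),
      Real.log_pow, Real.log_rpow h1p]
    try push_cast
    try ring
  have hlogx : Real.log (x1 / p) = Real.log x1 - Real.log p :=
    Real.log_div (by positivity) (by positivity)
  have hlogr : Real.log (θ * (1 - c) / (c * (1 - θ))) =
      Real.log θ + Real.log (1 - c) - (Real.log c + Real.log (1 - θ)) := by
    rw [Real.log_div (by positivity) (by positivity),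
      Real.log_mul (by positivity) (by positivity),
      Real.log_mul (by positivity) (by positivity)]
  rw [step1, step2, hlogA, hlogB, hDeq, hlogx, hlogr]
  constructor
  · intro h
    rw [← sub_eq_iff_eq_add', eq_div_iff hD']
    linear_combination -h
  · intro h
    rw [← sub_eq_iff_eq_add', eq_div_iff hD'] at h
    linear_combination -h
end
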